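/- Let h₂(y) = −y·log₂ y − (1−y)·log₂(1−y) (with the convention 0·log₂ 0 = 0) denote the binary entropy function. For every x ∈ (0, 2^{−1/2}] and every y ∈ [0, 1/2]: if h₂(y) ≥ x, then y ≥ x/(8·log₂(1/x)). -/

import Mathlib

/-!
In nats, `h₂(y) log 2 = η(y) + η(1 - y)` with `η(u) = -u log u`, and `η(1 - y) ≤ y`, so
`x log 2 ≤ y + η(y)`. The map `u ↦ u + η(u)` has derivative `-log u ≥ 0` on `(0, 1)`, hence is
monotone on `[0, 1]`. It therefore suffices that `t = x / (8 L)`, with `L = log₂ (1/x) ≥ 1/2`,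
satisfies `t + η(t) = t (1 - log t) < x log 2`; bounding `log L ≤ 2L - 1 - log 2`, this reduces
to `2L + 2 log 2 < 7 L log 2`, which holds because `log 2 > 2/3` and `L ≥ 1/2`.
-/

/-- The binary entropy function `h₂(y) = -y·log₂ y - (1-y)·log₂(1-y)`
(with the convention `0·log₂ 0 = 0`, which holds automatically since `Real.logb 2 0 = 0`). -/
noncomputable def binEnt (y : ℝ) : ℝ := -(y * Real.logb 2 y) - (1 - y) * Real.logb 2 (1 - y)

open Real Set

lemma binEnt_eq_binEntropy_div_log_two (y : ℝ) : binEnt y = binEntropy y / log 2 := by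
  simp only [binEnt, binEntropy, logb, log_inv]
  ring

lemma binEntropy_le_add_negMulLog {y : ℝ} (hy : y ≤ 1) : binEntropy y ≤ y + negMulLog y := by
  have := negMulLog_le_one_sub_self (sub_nonneg.2 hy)
  rw [binEntropy_eq_negMulLog_add_negMulLog_one_sub]
  linarith

lemma monotoneOn_add_negMulLog : MonotoneOn (fun u ↦ u + negMulLog u) (Icc 0 1) := by
  refine monotoneOn_of_hasDerivWithinAt_nonneg (f' := fun u ↦ -log u) (convex_Icc 0 1)
    (by fun_prop) (fun u hu ↦ ?_) (fun u hu ↦ ?_) <;> rw [interior_Icc] at hu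
  · exact ((hasDerivAt_id' u).add (hasDerivAt_negMulLog hu.1.ne')).hasDerivWithinAt.congr_deriv
      (by ring)
  · exact neg_nonneg.2 (log_nonpos hu.1.le hu.2.le)

lemma half_le_logb_one_div {x : ℝ} (hx0 : 0 < x) (hx : x ≤ 2 ^ (-(1/2 : ℝ))) :
    1/2 ≤ logb 2 (1/x) := by
  have := logb_le_logb_of_le (b := 2) one_lt_two hx0 hx
  rw [logb_rpow two_pos one_lt_two.ne'] at this
  rw [one_div x, logb_inv]
  linarith

lemma add_negMulLog_div_lt {x : ℝ} (hx : 0 < x) (hL : 1/2 ≤ logb 2 (1/x)) :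
    x / (8 * logb 2 (1/x)) + negMulLog (x / (8 * logb 2 (1/x))) < x * log 2 := by
  set L := logb 2 (1/x)
  set t := x / (8 * L) with ht_def
  have hL0 : 0 < L := by linarith
  have ht : 0 < t := by positivity
  have hlog_x : log x = -(L * log 2) := by
    rw [show L * log 2 = log (1/x) from div_mul_cancel₀ _ (log_pos one_lt_two).ne', one_div,
      log_inv, neg_neg]
  have hlog_t : log t = log x - 3 * log 2 - log L := by
    rw [log_div hx.ne' (by positivity), log_mul (by norm_num) hL0.ne',
      show (8 : ℝ) = 2 ^ 3 by norm_num, log_pow]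
    push_cast
    ring
  have hlog_L : log L ≤ 2 * L - 1 - log 2 := by
    have := log_le_sub_one_of_pos (show 0 < 2 * L by positivity)
    rw [log_mul two_ne_zero hL0.ne'] at this
    linarith
  have hlog_two := log_two_gt_d9
  have hkey : 1 - log t < 8 * L * log 2 := by
    rw [hlog_t, hlog_x]
    nlinarith
  calc t + negMulLog t = t * (1 - log t) := by rw [negMulLog]; ring
    _ < t * (8 * L * log 2) := mul_lt_mul_of_pos_left hkey ht
    _ = x * log 2 := by rw [ht_def]; field_simp

theorem stmt16 (x : ℝ) (hx : x ∈ Set.Ioc (0:ℝ) ((2:ℝ) ^ (-(1/2 : ℝ))))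
    (y : ℝ) (hy : y ∈ Set.Icc (0:ℝ) (1/2)) (h : x ≤ binEnt y) :
    x / (8 * Real.logb 2 (1 / x)) ≤ y := by
  obtain ⟨hx0, hx1⟩ := hx
  have hL := half_le_logb_one_div hx0 hx1
  set t := x / (8 * logb 2 (1 / x))
  have ht1 : t ≤ 1 := by
    have hx_le_one : x ≤ 1 := hx1.trans (rpow_le_one_of_one_le_of_nonpos one_le_two (by norm_num))
    rw [div_le_one (by linarith)]
    linarith
  by_contra! hyt
  have hxy : x * log 2 ≤ binEntropy y := by
    rwa [binEnt_eq_binEntropy_div_log_two, le_div_iff₀ (log_pos one_lt_two)] at h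
  have : binEntropy y < x * log 2 :=
    calc binEntropy y ≤ y + negMulLog y := binEntropy_le_add_negMulLog (by linarith)
      _ ≤ t + negMulLog t :=
        monotoneOn_add_negMulLog ⟨hy.1, by linarith⟩ ⟨by positivity, ht1⟩ hyt.le
      _ < x * log 2 := add_negMulLog_div_lt hx0 hL
  linarith
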